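/- Fix real numbers A ≥ 0, B > 0, ε > 0, V ≥ 0 and xlb < xub. A state is a tuple (xr, vr, or, xo, vo, oo) of reals. One loop iteration of the single-wheel-drive model transforms a state as follows. Control step: the robot chooses (ar, or₁) by one of: (i) brake: ar = −B, or₁ = or; (ii) accelerate: possible only if the safe condition holds, namely xlb + ((1 − or)/2)·(vr²/(2B) + K) < xr < xub − ((1 + or)/2)·(vr²/(2B) + K) and |xr − xo| ≥ vr²/(2B) + K + V·(ε + (vr + A·ε)/B), where K = (A/B + 1)·(A·ε²/2 + ε·vr), and then any ar with −B ≤ ar ≤ A, or₁ = or; (iii) stay: possible only if vr = 0, with ar = 0 and any or₁ with or₁² = 1. Simultaneously the obstacle chooses (vo₁, oo₁) by one of: (a) possible only if vo = 0: vo₁ = 0 and any oo₁ with oo₁² = 1; (b) oo₁ = oo and any vo₁ with 0 ≤ vo₁ ≤ V. Dynamics step: choose any t with 0 ≤ t ≤ ε and vr + ar·s ≥ 0 for all s ∈ [0, t], and pass to the state (xr + or₁·(vr·t + ar·t²/2), vr + ar·t, or₁, xo + oo₁·vo₁·t, vo₁, oo₁). Call a state reachable from an initial state if it arises after finitely many loop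 iterations. Theorem: if the initial state satisfies |xr − xo| ≥ vr²/(2B) + vr·V/B, xlb + ((1 − or)/2)·vr²/(2B) < xr < xub − ((1 + or)/2)·vr²/(2B), vr ≥ 0, or² = 1, oo² = 1 and 0 ≤ vo ≤ V, then every reachable state satisfies the safety condition: (vr > 0 → |xr − xo| > 0) and xlb < xr < xub. -/

import Mathlib

/-- State of the single-wheel-drive model: robot position, speed, orientation,
obstacle position, speed, orientation. -/
structure SWDState where
  xr : ℝ
  vr : ℝ
  orr : ℝ
  xo : ℝ
  vo : ℝ
  oo : ℝ

/-- Acceleration compensation term. -/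
noncomputable def swdK (A B ε vr : ℝ) : ℝ := (A / B + 1) * (A * ε ^ 2 / 2 + ε * vr)

/-- One loop iteration (control followed by dynamics) of the single-wheel-drive model. -/
def SWDStep (A B ε V xlb xub : ℝ) (s s' : SWDState) : Prop :=
  ∃ ar or₁ vo₁ oo₁ t : ℝ,
    -- robot control: brake, or accelerate when safe, or stay when stopped
    (((ar = -B ∧ or₁ = s.orr) ∨
      ((xlb + ((1 - s.orr) / 2) * (s.vr ^ 2 / (2 * B) + swdK A B ε s.vr) < s.xr ∧
        s.xr < xub - ((1 + s.orr) / 2) * (s.vr ^ 2 / (2 * B) + swdK A B ε s.vr) ∧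
        |s.xr - s.xo| ≥ s.vr ^ 2 / (2 * B) + swdK A B ε s.vr + V * (ε + (s.vr + A * ε) / B)) ∧
       (-B ≤ ar ∧ ar ≤ A) ∧ or₁ = s.orr) ∨
      (s.vr = 0 ∧ ar = 0 ∧ or₁ ^ 2 = 1))) ∧
    -- obstacle control: turn when stopped, or keep orientation with any speed up to V
    ((s.vo = 0 ∧ vo₁ = 0 ∧ oo₁ ^ 2 = 1) ∨ (oo₁ = s.oo ∧ 0 ≤ vo₁ ∧ vo₁ ≤ V)) ∧
    -- dynamics for any duration t within the control cycle and evolution domain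
    (0 ≤ t ∧ t ≤ ε ∧ (∀ u ∈ Set.Icc (0 : ℝ) t, s.vr + ar * u ≥ 0)) ∧
    s' = ⟨s.xr + or₁ * (s.vr * t + ar * t ^ 2 / 2), s.vr + ar * t, or₁,
          s.xo + oo₁ * vo₁ * t, vo₁, oo₁⟩

/-- Reachability: a state arises from the initial state after finitely many loop iterations. -/
def SWDReachable (A B ε V xlb xub : ℝ) (s0 s : SWDState) : Prop :=
  Relation.ReflTransGen (SWDStep A B ε V xlb xub) s0 s

/-!
The robot keeps the invariant that braking from its current state stops it inside its area and
that its braking distance, plus the distance the obstacle can cover meanwhile, fits into the gap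
to the obstacle. Since `(v + a t)² = v² + 2 a (v t + a t² / 2)`, braking spends exactly the
distance it travels from the braking distance, while an admissible acceleration over at most `ε`
increases braking distance plus travelled distance by at most `swdK A B ε v`, which is the reserve
demanded by the acceleration guard.
-/

lemma abs_mul_of_sq_eq_one {o : ℝ} (ho : o ^ 2 = 1) (z : ℝ) : |o * z| = |z| := by
  rcases sq_eq_one_iff.mp ho with rfl | rfl <;> simp

lemma abs_sub_le_abs_sub_displaced_add {o p x y d w t V : ℝ} (ho : o ^ 2 = 1) (hp : p ^ 2 = 1)
    (hd : 0 ≤ d) (hw : 0 ≤ w) (hwV : w ≤ V) (ht : 0 ≤ t) :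
    |x - y| ≤ |x + o * d - (y + p * w * t)| + d + V * t := by
  have hpw : |p * w * t| ≤ V * t := by
    rw [mul_assoc, abs_mul_of_sq_eq_one hp, abs_of_nonneg (by positivity)]
    exact mul_le_mul_of_nonneg_right hwV ht
  calc |x - y| = |(x + o * d - (y + p * w * t)) + -(o * d) + p * w * t| := by ring_nf
    _ ≤ |x + o * d - (y + p * w * t)| + |-(o * d)| + |p * w * t| := abs_add_three _ _ _
    _ ≤ |x + o * d - (y + p * w * t)| + d + V * t := by
      rw [abs_neg, abs_mul_of_sq_eq_one ho, abs_of_nonneg hd]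
      gcongr

/-- For `o = ±1`, the robot at `x` can travel the distance `D` in direction `o` without leaving
`(xlb, xub)`. -/
def SWDFits (xlb xub x o D : ℝ) : Prop :=
  xlb + (1 - o) / 2 * D < x ∧ x < xub - (1 + o) / 2 * D

namespace SWDFits

variable {xlb xub x o D D' d : ℝ}

lemma mono (ho : o ^ 2 = 1) (hD : D' ≤ D) (h : SWDFits xlb xub x o D) :
    SWDFits xlb xub x o D' := by
  obtain ⟨hlo, hhi⟩ := h
  rcases sq_eq_one_iff.mp ho with rfl | rfl <;> constructor <;> linarith

lemma move (ho : o ^ 2 = 1) (hd : 0 ≤ d) (hD : D' + d ≤ D) (h : SWDFits xlb xub x o D) :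
    SWDFits xlb xub (x + o * d) o D' := by
  obtain ⟨hlo, hhi⟩ := h
  rcases sq_eq_one_iff.mp ho with rfl | rfl <;> constructor <;> linarith

lemma zero_iff : SWDFits xlb xub x o 0 ↔ xlb < x ∧ x < xub := by
  simp [SWDFits]

end SWDFits

section Kinematics

variable {A B ε V v a t : ℝ}

lemma travel_nonneg (hv : 0 ≤ v) (hv' : 0 ≤ v + a * t) (ht : 0 ≤ t) :
    0 ≤ v * t + a * t ^ 2 / 2 := by
  have : v * t + a * t ^ 2 / 2 = t * (v + (v + a * t)) / 2 := by ring
  rw [this]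
  positivity

lemma brakingDist_add_travel_brake (hB : B ≠ 0) :
    (v + -B * t) ^ 2 / (2 * B) + (v * t + -B * t ^ 2 / 2) = v ^ 2 / (2 * B) := by
  field_simp
  ring

lemma obstacleReserve_brake (hB : B ≠ 0) : (v + -B * t) * V / B + V * t = v * V / B := by
  field_simp
  ring

lemma brakingDist_add_travel_le_of_accel (hA : 0 ≤ A) (hB : 0 < B) (hv : 0 ≤ v) (ht : 0 ≤ t)
    (htε : t ≤ ε) (haB : -B ≤ a) (haA : a ≤ A) (hv' : 0 ≤ v + a * t) :
    (v + a * t) ^ 2 / (2 * B) + (v * t + a * t ^ 2 / 2) ≤ v ^ 2 / (2 * B) + swdK A B ε v := by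
  have hd := travel_nonneg hv hv' ht
  have hdε : v * t + a * t ^ 2 / 2 ≤ A * ε ^ 2 / 2 + ε * v := by
    have := mul_le_mul haA (pow_le_pow_left₀ ht htε 2) (sq_nonneg t) hA
    linarith [mul_le_mul_of_nonneg_left htε hv]
  calc (v + a * t) ^ 2 / (2 * B) + (v * t + a * t ^ 2 / 2)
        = v ^ 2 / (2 * B) + (a / B + 1) * (v * t + a * t ^ 2 / 2) := by
        field_simp
        ring
    _ ≤ v ^ 2 / (2 * B) + (A / B + 1) * (A * ε ^ 2 / 2 + ε * v) := by
        have : 0 ≤ a / B + 1 := by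
          rw [div_add_one hB.ne']
          exact div_nonneg (by linarith) hB.le
        gcongr
    _ = v ^ 2 / (2 * B) + swdK A B ε v := rfl

lemma obstacleReserve_le_of_accel (hA : 0 ≤ A) (hB : 0 < B) (hV : 0 ≤ V) (ht : 0 ≤ t)
    (htε : t ≤ ε) (haA : a ≤ A) :
    (v + a * t) * V / B + V * t ≤ V * (ε + (v + A * ε) / B) := by
  have := mul_le_mul haA htε ht hA
  calc (v + a * t) * V / B + V * t ≤ (v + A * ε) * V / B + V * ε := by gcongr
    _ = V * (ε + (v + A * ε) / B) := by ring

end Kinematics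

def SWDInv (B V xlb xub : ℝ) (s : SWDState) : Prop :=
  0 ≤ s.vr ∧ s.orr ^ 2 = 1 ∧ s.oo ^ 2 = 1 ∧
  s.vr ^ 2 / (2 * B) + s.vr * V / B ≤ |s.xr - s.xo| ∧
  SWDFits xlb xub s.xr s.orr (s.vr ^ 2 / (2 * B))

namespace SWDInv

variable {A B ε V xlb xub : ℝ} {s s' : SWDState}

lemma step (hA : 0 ≤ A) (hB : 0 < B) (hV : 0 ≤ V) (hI : SWDInv B V xlb xub s)
    (hstep : SWDStep A B ε V xlb xub s s') : SWDInv B V xlb xub s' := by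
  obtain ⟨hv, ho, hoo, hgap, hfit⟩ := hI
  obtain ⟨a, o₁, w, p, t, hctl, hobs, ⟨ht, htε, hdom⟩, rfl⟩ := hstep
  have hv' : 0 ≤ s.vr + a * t := hdom t ⟨ht, le_rfl⟩
  have hd := travel_nonneg hv hv' ht
  obtain ⟨hp, hw, hwV⟩ : p ^ 2 = 1 ∧ 0 ≤ w ∧ w ≤ V := by
    rcases hobs with ⟨-, rfl, hp⟩ | ⟨rfl, hw⟩
    exacts [⟨hp, le_rfl, hV⟩, ⟨hoo, hw⟩]
  have hmove := abs_sub_le_abs_sub_displaced_add (x := s.xr) (y := s.xo) ho hp hd hw hwV ht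
  rcases hctl with ⟨rfl, rfl⟩ | ⟨⟨hlo, hhi, hsafe⟩, ⟨haB, haA⟩, rfl⟩ |
    ⟨hv0, rfl, ho₁⟩
  · have hstop := brakingDist_add_travel_brake (v := s.vr) (t := t) hB.ne'
    refine ⟨hv', ho, hp, ?_, hfit.move ho hd hstop.le⟩
    linarith [obstacleReserve_brake (v := s.vr) (t := t) (V := V) hB.ne']
  · have hstop := brakingDist_add_travel_le_of_accel hA hB hv ht htε haB haA hv'
    refine ⟨hv', ho, hp, ?_, SWDFits.move ho hd hstop ⟨hlo, hhi⟩⟩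
    linarith [obstacleReserve_le_of_accel (v := s.vr) hA hB hV ht htε haA]
  · refine ⟨hv', ho₁, hp, by simp [hv0], ?_⟩
    simpa [hv0, SWDFits.zero_iff] using hfit

lemma safe (hB : 0 < B) (hV : 0 ≤ V) (hI : SWDInv B V xlb xub s) :
    (s.vr > 0 → |s.xr - s.xo| > 0) ∧ xlb < s.xr ∧ s.xr < xub := by
  obtain ⟨-, ho, -, hgap, hfit⟩ := hI
  refine ⟨fun hpos => lt_of_lt_of_le (by positivity) hgap, ?_⟩
  exact SWDFits.zero_iff.mp (hfit.mono ho (by positivity))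

end SWDInv

theorem swd_safety_general
    (A B ε V xlb xub : ℝ)
    (hA : A ≥ 0) (hB : B > 0) (hV : V ≥ 0)
    (s0 : SWDState)
    (hdist : |s0.xr - s0.xo| ≥ s0.vr ^ 2 / (2 * B) + s0.vr * V / B)
    (hlo : xlb + ((1 - s0.orr) / 2) * s0.vr ^ 2 / (2 * B) < s0.xr)
    (hhi : s0.xr < xub - ((1 + s0.orr) / 2) * s0.vr ^ 2 / (2 * B))
    (hvr : s0.vr ≥ 0) (hor : s0.orr ^ 2 = 1) (hoo : s0.oo ^ 2 = 1) :
    ∀ s : SWDState, SWDReachable A B ε V xlb xub s0 s →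
      (s.vr > 0 → |s.xr - s.xo| > 0) ∧ xlb < s.xr ∧ s.xr < xub := by
  intro s hs
  have hI0 : SWDInv B V xlb xub s0 := by
    rw [mul_div_assoc] at hlo hhi
    exact ⟨hvr, hor, hoo, hdist, hlo, hhi⟩
  refine SWDInv.safe hB hV ?_
  induction hs with
  | refl => exact hI0
  | tail _ hstep ih => exact ih.step hA hB hV hstep

theorem swd_safety
    (A B ε V xlb xub : ℝ)
    (hA : A ≥ 0) (hB : B > 0) (hε : ε > 0) (hV : V ≥ 0) (hbounds : xlb < xub)
    (s0 : SWDState)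
    (hdist : |s0.xr - s0.xo| ≥ s0.vr ^ 2 / (2 * B) + s0.vr * V / B)
    (hlo : xlb + ((1 - s0.orr) / 2) * s0.vr ^ 2 / (2 * B) < s0.xr)
    (hhi : s0.xr < xub - ((1 + s0.orr) / 2) * s0.vr ^ 2 / (2 * B))
    (hvr : s0.vr ≥ 0) (hor : s0.orr ^ 2 = 1) (hoo : s0.oo ^ 2 = 1)
    (hvo : 0 ≤ s0.vo ∧ s0.vo ≤ V) :
    ∀ s : SWDState, SWDReachable A B ε V xlb xub s0 s →
      (s.vr > 0 → |s.xr - s.xo| > 0) ∧ xlb < s.xr ∧ s.xr < xub :=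
  swd_safety_general A B ε V xlb xub hA hB hV s0 hdist hlo hhi hvr hor hoo
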